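/- For all nonnegative integers i, j: Σ_{l=0}^{∞} (C(i,l) mod 2) · (−1)^{s₂(l)} · (C(j,l) mod 2) = C(i+j, i) mod 2, where both sides are integers in {−1,0,1} ∩ ℤ and the sum has finitely many nonzero terms. -/
import Mathlib


def s2 (n : ℕ) : ℕ := (Nat.digits 2 n).sum

private def chi (n k : ℕ) : ℤ := ((Nat.choose n k % 2 : ℕ) : ℤ)

private def ff (i j l : ℕ) : ℤ := chi i l * (-1) ^ (s2 l) * chi j l

private lemma s2_two_mul (l : ℕ) : s2 (2 * l) = s2 l := by
  rcases Nat.eq_zero_or_pos l with rfl | hl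
  · simp
  · have h : 2 * l ≠ 0 := by omega
    rw [s2, Nat.digits_def' (by norm_num) (by omega)]
    simp [Nat.mul_div_cancel_left, Nat.mul_mod_right, s2]

private lemma s2_two_mul_add_one (l : ℕ) : s2 (2 * l + 1) = s2 l + 1 := by
  rw [s2, Nat.digits_def' (by norm_num) (by omega)]
  have h1 : (2 * l + 1) % 2 = 1 := by omega
  have h2 : (2 * l + 1) / 2 = l := by omega
  rw [h1, h2]
  simp [s2, Nat.add_comm]

instance : Fact (Nat.Prime 2) := ⟨Nat.prime_two⟩

private lemma chi_even (n l : ℕ) : chi n (2 * l) = chi (n / 2) l := by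
  have h := Choose.choose_modEq_choose_mod_mul_choose_div_nat (p := 2) (n := n) (k := 2 * l)
  unfold chi
  rw [Nat.ModEq] at h
  have h1 : (2 * l) % 2 = 0 := by omega
  have h2 : (2 * l) / 2 = l := by omega
  rw [h1, h2, Nat.choose_zero_right, one_mul] at h
  rw [h]

private lemma chi_odd (n l : ℕ) : chi n (2 * l + 1) = ((n % 2 : ℕ) : ℤ) * chi (n / 2) l := by
  have h := Choose.choose_modEq_choose_mod_mul_choose_div_nat (p := 2) (n := n) (k := 2 * l + 1)
  unfold chi
  rw [Nat.ModEq] at h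
  have h1 : (2 * l + 1) % 2 = 1 := by omega
  have h2 : (2 * l + 1) / 2 = l := by omega
  rw [h1, h2, Nat.choose_one_right] at h
  rw [h]
  rcases Nat.mod_two_eq_zero_or_one n with hn | hn <;> rw [hn] <;> simp [Nat.mul_mod]

private lemma sum_ext (i j : ℕ) {N : ℕ} (h : min i j + 1 ≤ N) :
    ∑ l ∈ Finset.range N, ff i j l = ∑ l ∈ Finset.range (min i j + 1), ff i j l := by
  apply (Finset.sum_subset (Finset.range_subset_range.mpr h) ?_).symm
  intro l _ hl
  simp only [Finset.mem_range, not_lt] at hl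
  have : i < l ∨ j < l := by omega
  rcases this with h' | h' <;> simp [ff, chi, Nat.choose_eq_zero_of_lt h']

private lemma sum_range_two_mul (g : ℕ → ℤ) (m : ℕ) :
    ∑ l ∈ Finset.range (2 * m), g l = ∑ l ∈ Finset.range m, (g (2 * l) + g (2 * l + 1)) := by
  induction m with
  | zero => simp
  | succ m ih =>
    have : 2 * (m + 1) = (2 * m + 1) + 1 := by ring
    rw [this, Finset.sum_range_succ, Finset.sum_range_succ, ih, Finset.sum_range_succ]
    ring

/-- the RHS recursion -/
private lemma rhs_step (i j : ℕ) :
    chi (i + j) i = (1 - ((i % 2 : ℕ) : ℤ) * ((j % 2 : ℕ) : ℤ)) * chi (i / 2 + j / 2) (i / 2) := by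
  have h := Choose.choose_modEq_choose_mod_mul_choose_div_nat (p := 2) (n := i + j) (k := i)
  rw [Nat.ModEq] at h
  unfold chi
  rcases Nat.mod_two_eq_zero_or_one i with hi | hi <;>
    rcases Nat.mod_two_eq_zero_or_one j with hj | hj
  · have h1 : (i + j) % 2 = 0 := by omega
    have h2 : (i + j) / 2 = i / 2 + j / 2 := by omega
    rw [h1, h2, hi, Nat.choose_zero_right, one_mul] at h
    rw [h, hi, hj]; push_cast; ring
  · have h1 : (i + j) % 2 = 1 := by omega
    have h2 : (i + j) / 2 = i / 2 + j / 2 := by omega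
    rw [h1, h2, hi, Nat.choose_zero_right, one_mul] at h
    rw [h, hi, hj]; push_cast; ring
  · have h1 : (i + j) % 2 = 1 := by omega
    have h2 : (i + j) / 2 = i / 2 + j / 2 := by omega
    rw [h1, h2, hi] at h
    simp only [Nat.choose_self, one_mul] at h
    rw [h, hi, hj]; push_cast; ring
  · have h1 : (i + j) % 2 = 0 := by omega
    rw [h1, hi] at h
    simp only [Nat.choose_eq_zero_of_lt (by norm_num : 0 < 1), zero_mul, Nat.zero_mod] at h
    rw [h, hi, hj]; push_cast; ring

private lemma main_ind : ∀ n i j : ℕ, i + j ≤ n →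
    ∑ l ∈ Finset.range (min i j + 1), ff i j l = chi (i + j) i := by
  intro n
  induction n with
  | zero =>
    intro i j hij
    have hi : i = 0 := by omega
    have hj : j = 0 := by omega
    subst hi; subst hj
    simp [ff, chi, s2]
  | succ n ih =>
    intro i j hij
    by_cases h0 : i = 0 ∧ j = 0
    · obtain ⟨rfl, rfl⟩ := h0
      simp [ff, chi, s2]
    · have hlt : i / 2 + j / 2 ≤ n := by omega
      have key : ∑ l ∈ Finset.range (min i j + 1), ff i j l
          = (1 - ((i % 2 : ℕ) : ℤ) * ((j % 2 : ℕ) : ℤ)) *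
            ∑ l ∈ Finset.range (min (i / 2) (j / 2) + 1), ff (i / 2) (j / 2) l := by
        rw [← sum_ext i j (N := 2 * (max i j + 1)) (by omega),
          sum_range_two_mul,
          ← sum_ext (i / 2) (j / 2) (N := max i j + 1) (by omega),
          Finset.mul_sum]
        apply Finset.sum_congr rfl
        intro l _
        rw [ff, ff, ff, chi_even, chi_even, chi_odd, chi_odd, s2_two_mul, s2_two_mul_add_one,
          pow_succ]
        ring
      rw [key, ih _ _ hlt, ← rhs_step]

theorem pascal_mod_two_transpose_diag_identity (i j : ℕ) :
    ∑ l ∈ Finset.range (min i j + 1),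
      ((Nat.choose i l % 2 : ℕ) : ℤ) * (-1) ^ (s2 l) * ((Nat.choose j l % 2 : ℕ) : ℤ)
      = ((Nat.choose (i + j) i % 2 : ℕ) : ℤ) := by
  exact main_ind (i + j) i j le_rfl
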